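/- There is a fixed singly exponential function E (i.e., E(n) = 2^{p(n)} for some polynomial p) such that the following holds: let Φ be a finite set of linear inequalities of the form a₀ + a₁x₁ + ⋯ + a_nx_n ≤ b₀ + b₁x₁ + ⋯ + b_nx_n in variables x₁,…,x_n, with all coefficients in ℕ, and let ‖Φ‖ be the size of Φ under binary encoding of integers. If Φ has a solution over ℕ* = ℕ ∪ {ℵ₀}, then Φ has a solution over ℕ* in which every finite value is at most E(‖Φ‖). -/

import Mathlib

/-! Let `s = ‖Φ‖`, so that every coefficient is below `2 ^ s` and `n ≤ s`. Of the `n + 1` windows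
`(2 ^ (s * t), 2 ^ (s * (t + 1))]`, `t ≤ n`, one contains no value of a given solution `x`; send every
value above `2 ^ (s * t)` to `ℵ₀`. An inequality whose right-hand side becomes `ℵ₀` holds trivially.
Otherwise its right-hand variables are at most `2 ^ (s * t)`, so its right-hand side is at most
`2 ^ (s * (t + 1))`, hence so are its left-hand variables, which by the gap are then at most
`2 ^ (s * t)`: neither side has changed. -/

/-- A linear inequality a₀ + a₁x₁ + ⋯ + a_nx_n ≤ b₀ + b₁x₁ + ⋯ + b_nx_n
with coefficients in ℕ, in n variables. -/
structure LinIneq (n : ℕ) where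
  a0 : ℕ
  a : Fin n → ℕ
  b0 : ℕ
  b : Fin n → ℕ

/-- The inequality holds for an assignment of values in ℕ* = ℕ ∪ {ℵ₀}
(here ℕ∞ = WithTop ℕ, whose arithmetic satisfies ℵ₀ + x = ℵ₀, 0·ℵ₀ = 0, and
n·ℵ₀ = ℵ₀ for n > 0). -/
def LinIneq.Holds {n : ℕ} (e : LinIneq n) (x : Fin n → ℕ∞) : Prop :=
  (e.a0 : ℕ∞) + ∑ i, (e.a i : ℕ∞) * x i ≤ (e.b0 : ℕ∞) + ∑ i, (e.b i : ℕ∞) * x i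

/-- The size of an inequality, with integers encoded in binary. -/
def LinIneq.size {n : ℕ} (e : LinIneq n) : ℕ :=
  (Nat.log 2 e.a0 + 1) + (Nat.log 2 e.b0 + 1) +
    ∑ i, ((Nat.log 2 (e.a i) + 1) + (Nat.log 2 (e.b i) + 1))

/-- The size ‖Φ‖ of a finite system of inequalities. -/
def sysSize {n : ℕ} (Φ : List (LinIneq n)) : ℕ := (Φ.map LinIneq.size).sum

theorem exists_le_card_forall_notMem_Ioc {ι α : Type*} [Fintype ι] [Preorder α] {f : ℕ → α}
    (hf : Monotone f) (x : ι → α) :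
    ∃ t ≤ Fintype.card ι, ∀ i, x i ∉ Set.Ioc (f t) (f (t + 1)) := by
  by_contra! h
  choose w hw using fun t : Fin (Fintype.card ι + 1) => h t (Nat.lt_succ_iff.mp t.isLt)
  obtain ⟨t₁, t₂, hne, heq⟩ := Fintype.exists_ne_map_eq_of_card_lt w (by simp)
  have hdisj := hf.pairwise_disjoint_on_Ioc_succ (Fin.val_injective.ne hne)
  simp only [Function.onFun, Nat.succ_eq_succ, Nat.succ_eq_add_one] at hdisj
  exact hdisj.notMem_of_mem_left (hw t₁) (heq ▸ hw t₂)

theorem Nat.add_lt_mul_of_lt_of_lt {a b c d : ℕ} (hab : a < b) (hcd : c < d) : a + c < b * d := by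
  nlinarith

theorem Finset.sum_lt_prod_of_lt {ι : Type*} {s : Finset ι} {c d : ι → ℕ}
    (h : ∀ i ∈ s, c i < d i) : ∑ i ∈ s, c i < ∏ i ∈ s, d i := by
  induction s using Finset.cons_induction with
  | empty => simp
  | cons j s hj ih =>
    rw [Finset.forall_mem_cons] at h
    rw [Finset.sum_cons, Finset.prod_cons]
    exact Nat.add_lt_mul_of_lt_of_lt h.1 (ih h.2)

section TopAbove

variable {ι : Type*} {x : ι → ℕ∞} {r : ℕ∞} {i : ι}

def topAbove (r : ℕ∞) (x : ι → ℕ∞) : ι → ℕ∞ := fun i => if x i ≤ r then x i else ⊤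

theorem topAbove_of_le (h : x i ≤ r) : topAbove r x i = x i := if_pos h

theorem le_of_topAbove_ne_top (h : topAbove r x i ≠ ⊤) : x i ≤ r := by
  by_contra hxi
  exact h (if_neg hxi)

theorem topAbove_le_of_ne_top (h : topAbove r x i ≠ ⊤) : topAbove r x i ≤ r :=
  (topAbove_of_le (le_of_topAbove_ne_top h)).trans_le (le_of_topAbove_ne_top h)

end TopAbove

section AffineForm

variable {ι : Type*} [Fintype ι]

def affineEval (c₀ : ℕ) (c : ι → ℕ) (x : ι → ℕ∞) : ℕ∞ := c₀ + ∑ i, (c i : ℕ∞) * x i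

variable {c₀ : ℕ} {c : ι → ℕ} {x y : ι → ℕ∞}

theorem affineEval_congr (h : ∀ i, c i ≠ 0 → x i = y i) :
    affineEval c₀ c x = affineEval c₀ c y := by
  unfold affineEval
  congr 1
  refine Finset.sum_congr rfl fun i _ => ?_
  by_cases hi : c i = 0
  · simp [hi]
  · rw [h i hi]

theorem le_affineEval {i : ι} (hi : c i ≠ 0) : x i ≤ affineEval c₀ c x :=
  calc x i ≤ (c i : ℕ∞) * x i :=
        le_mul_of_one_le_left' (by exact_mod_cast Nat.one_le_iff_ne_zero.mpr hi)
    _ ≤ ∑ j, (c j : ℕ∞) * x j :=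
        Finset.single_le_sum (f := fun j => (c j : ℕ∞) * x j) (fun j _ => zero_le)
          (Finset.mem_univ i)
    _ ≤ affineEval c₀ c x := le_add_self

theorem affineEval_le {r : ℕ∞} (h : ∀ i, c i ≠ 0 → x i ≤ r) :
    affineEval c₀ c x ≤ c₀ + ((∑ i, c i : ℕ) : ℕ∞) * r := by
  unfold affineEval
  rw [Nat.cast_sum, Finset.sum_mul]
  refine add_le_add_right (Finset.sum_le_sum fun i _ => ?_) _
  by_cases hi : c i = 0
  · simp [hi]
  · exact mul_le_mul_right (h i hi) _

theorem le_of_affineEval_topAbove_ne_top {r : ℕ∞} {i : ι}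
    (h : affineEval c₀ c (topAbove r x) ≠ ⊤) (hi : c i ≠ 0) : x i ≤ r :=
  le_of_topAbove_ne_top (ne_top_of_le_ne_top h (le_affineEval hi))

end AffineForm

namespace LinIneq

variable {n : ℕ}

theorem holds_iff (e : LinIneq n) (x : Fin n → ℕ∞) :
    e.Holds x ↔ affineEval e.a0 e.a x ≤ affineEval e.b0 e.b x := Iff.rfl

theorem Holds.topAbove_of_gap {e : LinIneq n} {x : Fin n → ℕ∞} (hx : e.Holds x) {r R : ℕ∞}
    (hR : e.b0 + ((∑ i, e.b i : ℕ) : ℕ∞) * r ≤ R) (hgap : ∀ i, x i ∉ Set.Ioc r R) :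
    e.Holds (topAbove r x) := by
  rw [holds_iff] at hx ⊢
  by_cases htop : affineEval e.b0 e.b (topAbove r x) = ⊤
  · exact htop ▸ le_top
  have hb : ∀ i, e.b i ≠ 0 → x i ≤ r := fun i => le_of_affineEval_topAbove_ne_top htop
  have hrhs : affineEval e.b0 e.b (topAbove r x) = affineEval e.b0 e.b x :=
    affineEval_congr fun i hi => topAbove_of_le (hb i hi)
  have ha : ∀ i, e.a i ≠ 0 → x i ≤ r := fun i hi => by
    by_contra hxi
    exact hgap i ⟨not_le.mp hxi, (le_affineEval hi).trans (hx.trans ((affineEval_le hb).trans hR))⟩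
  rwa [hrhs, affineEval_congr fun i hi => topAbove_of_le (ha i hi)]

theorem b0_add_sum_b_lt_two_pow_size (e : LinIneq n) : e.b0 + ∑ i, e.b i < 2 ^ e.size := by
  have hlog (m : ℕ) : m < 2 ^ (Nat.log 2 m + 1) := Nat.lt_pow_succ_log_self one_lt_two m
  calc e.b0 + ∑ i, e.b i < 2 ^ (Nat.log 2 e.b0 + 1) * ∏ i, 2 ^ (Nat.log 2 (e.b i) + 1) :=
        Nat.add_lt_mul_of_lt_of_lt (hlog _) (Finset.sum_lt_prod_of_lt fun i _ => hlog _)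
    _ = 2 ^ ((Nat.log 2 e.b0 + 1) + ∑ i, (Nat.log 2 (e.b i) + 1)) := by
        rw [Finset.prod_pow_eq_pow_sum, ← pow_add]
    _ ≤ 2 ^ e.size := by
        refine Nat.pow_le_pow_right two_pos ?_
        have : ∑ i, (Nat.log 2 (e.b i) + 1) ≤
            ∑ i, ((Nat.log 2 (e.a i) + 1) + (Nat.log 2 (e.b i) + 1)) :=
          Finset.sum_le_sum fun _ _ => Nat.le_add_left _ _
        rw [size]
        omega

theorem card_le_size (e : LinIneq n) : n ≤ e.size :=
  calc n = ∑ _i : Fin n, 1 := by simp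
    _ ≤ ∑ i, ((Nat.log 2 (e.a i) + 1) + (Nat.log 2 (e.b i) + 1)) :=
        Finset.sum_le_sum fun _ _ => by omega
    _ ≤ e.size := Nat.le_add_left _ _

theorem size_le_sysSize {e : LinIneq n} {Φ : List (LinIneq n)} (he : e ∈ Φ) :
    e.size ≤ sysSize Φ :=
  List.single_le_sum (fun _ _ => Nat.zero_le _) _ (List.mem_map_of_mem he)

theorem b0_add_sum_b_mul_le {e : LinIneq n} {Φ : List (LinIneq n)} (he : e ∈ Φ) {r : ℕ}
    (hr : 1 ≤ r) : e.b0 + (∑ i, e.b i) * r ≤ 2 ^ sysSize Φ * r :=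
  calc e.b0 + (∑ i, e.b i) * r ≤ (e.b0 + ∑ i, e.b i) * r := by nlinarith
    _ ≤ 2 ^ sysSize Φ * r := Nat.mul_le_mul_right r <|
        (b0_add_sum_b_lt_two_pow_size e).le.trans <|
          Nat.pow_le_pow_right two_pos (size_le_sysSize he)

end LinIneq

theorem sysSize_eq_zero_or_card_le {n : ℕ} (Φ : List (LinIneq n)) :
    sysSize Φ = 0 ∨ n ≤ sysSize Φ := by
  rcases Φ with _ | ⟨e, Φ⟩
  · simp [sysSize]
  · exact Or.inr ((e.card_le_size).trans (LinIneq.size_le_sysSize List.mem_cons_self))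

/-- Lemma 23: there is a fixed singly exponential function E(n) = 2^{p(n)} such that
any finite system of linear inequalities over ℕ* which is solvable has a solution
whose finite values are all at most E(‖Φ‖). -/
theorem small_solutions_over_NStar : ∃ p : Polynomial ℕ,
    ∀ (n : ℕ) (Φ : List (LinIneq n)),
      (∃ x : Fin n → ℕ∞, ∀ e ∈ Φ, e.Holds x) →
      ∃ x : Fin n → ℕ∞, (∀ e ∈ Φ, e.Holds x) ∧
        ∀ i, x i ≠ ⊤ → x i ≤ ((2 ^ p.eval (sysSize Φ) : ℕ) : ℕ∞) := by
  refine ⟨Polynomial.X ^ 2, fun n Φ ⟨x, hx⟩ => ?_⟩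
  set s := sysSize Φ
  have hE : Monotone fun t => ((2 ^ (s * t) : ℕ) : ℕ∞) :=
    Nat.mono_cast.comp fun _ _ h => Nat.pow_le_pow_right two_pos (Nat.mul_le_mul_left s h)
  obtain ⟨t, htn, hgap⟩ := exists_le_card_forall_notMem_Ioc hE x
  rw [Fintype.card_fin] at htn
  refine ⟨topAbove (2 ^ (s * t) : ℕ) x, fun e he => (hx e he).topAbove_of_gap ?_ hgap,
    fun i hi => (topAbove_le_of_ne_top hi).trans ?_⟩
  · have key : e.b0 + (∑ i, e.b i) * 2 ^ (s * t) ≤ 2 ^ (s * (t + 1)) := by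
      rw [mul_add_one, pow_add, mul_comm _ (2 ^ s)]
      exact e.b0_add_sum_b_mul_le he Nat.one_le_two_pow
    exact_mod_cast key
  · have hst : s * t ≤ s * s := by
      rcases sysSize_eq_zero_or_card_le Φ with h | h
      · simp [s, h]
      · exact Nat.mul_le_mul_left s (htn.trans h)
    rw [Polynomial.eval_pow, Polynomial.eval_X, sq]
    exact_mod_cast Nat.pow_le_pow_right two_pos hst
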